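/- In one dimension (m = 1): let y ∈ ℝⁿ, c ∈ ℝʳ, Z(t) ∈ ℝ^{n×r} of full column rank evolve by dZ/dt = (y − ŷ)cᵀ with w = (ZᵀZ)⁻¹Zᵀy and ŷ = Zw. Then d(cᵀw)/dt = cᵀ(ZᵀZ)⁻¹c · ‖y − ŷ‖² ≥ 0, so the alignment cᵀw is nondecreasing. -/

import Mathlib

/-!
By the normal equations `Zᵀ(y − ŷ) = 0`, the flow `dZ/dt = (y − ŷ)cᵀ` leaves the Gram matrix
`ZᵀZ` unchanged. So in `cᵀw = cᵀ(ZᵀZ)⁻¹Zᵀy` only `Zᵀy` moves, with derivative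
`c (y − ŷ)ᵀy = c ‖y − ŷ‖²`. The factor `cᵀ(ZᵀZ)⁻¹c` is nonnegative since the inverse of the
positive semidefinite matrix `ZᵀZ` is again positive semidefinite.
-/

open Matrix

section LeastSquares

variable {R m n : Type*} [CommRing R] [Fintype m] [Fintype n]

theorem transpose_mulVec_leastSquaresResidual_eq_zero [DecidableEq n] (A : Matrix m n R)
    (hA : IsUnit (Aᵀ * A)) (y : m → R) : Aᵀ *ᵥ (y - A *ᵥ ((Aᵀ * A)⁻¹ *ᵥ (Aᵀ *ᵥ y))) = 0 := by
  rw [mulVec_sub, mulVec_mulVec, mulVec_mulVec,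
    mul_nonsing_inv _ ((isUnit_iff_isUnit_det _).mp hA), one_mulVec, sub_self]

theorem sub_mulVec_dotProduct_eq_dotProduct_self (A : Matrix m n R) (y : m → R) (v : n → R)
    (h : Aᵀ *ᵥ (y - A *ᵥ v) = 0) :
    (y - A *ᵥ v) ⬝ᵥ y = (y - A *ᵥ v) ⬝ᵥ (y - A *ᵥ v) := by
  have hfit : (y - A *ᵥ v) ⬝ᵥ (A *ᵥ v) = 0 := by
    rw [dotProduct_mulVec, ← mulVec_transpose, h, zero_dotProduct]
  rw [dotProduct_sub, hfit, sub_zero]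

end LeastSquares

theorem dotProduct_inv_transpose_mul_self_mulVec_nonneg {m n : Type*} [Fintype m] [Fintype n]
    [DecidableEq n] (A : Matrix m n ℝ) (c : n → ℝ) : 0 ≤ c ⬝ᵥ ((Aᵀ * A)⁻¹ *ᵥ c) := by
  simpa [conjTranspose_eq_transpose_of_trivial] using
    (posSemidef_conjTranspose_mul_self A).inv.dotProduct_mulVec_nonneg c

section Flow

variable {𝕜 m n : Type*} [NontriviallyNormedField 𝕜] [Fintype m] [Fintype n]
  {Z : 𝕜 → Matrix m n 𝕜} {t : 𝕜}

omit [Fintype n] in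
theorem hasDerivAt_transpose_mul_self_apply {Z' : Matrix m n 𝕜}
    (hZ : ∀ i j, HasDerivAt (fun s => Z s i j) (Z' i j) t) (j k : n) :
    HasDerivAt (fun s => ((Z s)ᵀ * Z s) j k) ((Z'ᵀ * Z t + (Z t)ᵀ * Z') j k) t := by
  simp only [mul_apply, transpose_apply, Matrix.add_apply, ← Finset.sum_add_distrib]
  exact HasDerivAt.fun_sum fun i _ => (hZ i j).mul (hZ i k)

theorem hasDerivAt_dotProduct_mulVec_transpose_mulVec {Z' : Matrix m n 𝕜}
    (hZ : ∀ i j, HasDerivAt (fun s => Z s i j) (Z' i j) t) (c : n → 𝕜) (B : Matrix n n 𝕜)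
    (y : m → 𝕜) :
    HasDerivAt (fun s => c ⬝ᵥ (B *ᵥ ((Z s)ᵀ *ᵥ y))) (c ⬝ᵥ (B *ᵥ (Z'ᵀ *ᵥ y))) t := by
  simp only [dotProduct, mulVec, transpose_apply]
  refine HasDerivAt.fun_sum fun j _ => HasDerivAt.const_mul _ ?_
  refine HasDerivAt.fun_sum fun k _ => HasDerivAt.const_mul _ ?_
  exact HasDerivAt.fun_sum fun i _ => (hZ i k).mul_const (y i)

theorem hasDerivAt_dotProduct_mulVec_transpose_mulVec_of_vecMulVec {e : m → 𝕜} {c : n → 𝕜}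
    (hZ : ∀ i j, HasDerivAt (fun s => Z s i j) (e i * c j) t) (B : Matrix n n 𝕜) (y : m → 𝕜) :
    HasDerivAt (fun s => c ⬝ᵥ (B *ᵥ ((Z s)ᵀ *ᵥ y))) ((c ⬝ᵥ (B *ᵥ c)) * (e ⬝ᵥ y)) t := by
  convert hasDerivAt_dotProduct_mulVec_transpose_mulVec (Z' := vecMulVec e c) hZ c B y using 1
  rw [transpose_vecMulVec, vecMulVec_mulVec, op_smul_eq_smul, mulVec_smul,
    dotProduct_smul, smul_eq_mul, mul_comm]

end Flow

theorem transpose_mul_self_eq_of_hasDerivAt_vecMulVec {m n : Type*} [Fintype m] [Fintype n]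
    {Z : ℝ → Matrix m n ℝ} {e : ℝ → m → ℝ} {c : n → ℝ}
    (hZ : ∀ t i j, HasDerivAt (fun s => Z s i j) (e t i * c j) t)
    (he : ∀ t, (Z t)ᵀ *ᵥ e t = 0) (s t : ℝ) : (Z s)ᵀ * Z s = (Z t)ᵀ * Z t := by
  ext j k
  have hzero : ∀ u, HasDerivAt (fun v => ((Z v)ᵀ * Z v) j k) 0 u := by
    intro u
    have hZ' : (vecMulVec (e u) c)ᵀ * Z u + (Z u)ᵀ * vecMulVec (e u) c = 0 := by
      rw [transpose_vecMulVec, vecMulVec_mul, mul_vecMulVec, ← mulVec_transpose, he u,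
        zero_vecMulVec, vecMulVec_zero, add_zero]
    have h := hasDerivAt_transpose_mul_self_apply (Z' := vecMulVec (e u) c) (hZ u) j k
    rwa [hZ', Matrix.zero_apply] at h
  exact is_const_of_deriv_eq_zero (fun u => (hzero u).differentiableAt)
    (fun u => (hzero u).deriv) s t

/-- (m = 1 case.) Let `Z(t)` evolve by `dZ/dt = (y − ŷ)cᵀ` with
`w = (ZᵀZ)⁻¹Zᵀy`, `ŷ = Zw`, and `Z(t)` of full column rank. Then
`d(cᵀw)/dt = cᵀ(ZᵀZ)⁻¹c · ‖y − ŷ‖² ≥ 0`, so the alignment `cᵀw` is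
nondecreasing. -/
theorem stmt17 (n r : ℕ)
    (y : Fin n → ℝ) (c : Fin r → ℝ)
    (Z : ℝ → Matrix (Fin n) (Fin r) ℝ)
    (hZ : ∀ t : ℝ, IsUnit ((Z t)ᵀ * Z t))
    (w : ℝ → (Fin r → ℝ))
    (hw : ∀ t, w t = ((Z t)ᵀ * Z t)⁻¹ *ᵥ ((Z t)ᵀ *ᵥ y))
    (yhat : ℝ → (Fin n → ℝ)) (hyhat : ∀ t, yhat t = Z t *ᵥ w t)
    (hdyn : ∀ t : ℝ, ∀ i j, HasDerivAt (fun s => Z s i j)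
      ((y - yhat t) i * c j) t) :
    (∀ t : ℝ,
      HasDerivAt (fun s => c ⬝ᵥ w s)
        ((c ⬝ᵥ (((Z t)ᵀ * Z t)⁻¹ *ᵥ c)) * ((y - yhat t) ⬝ᵥ (y - yhat t))) t ∧
      0 ≤ (c ⬝ᵥ (((Z t)ᵀ * Z t)⁻¹ *ᵥ c)) * ((y - yhat t) ⬝ᵥ (y - yhat t))) ∧
    Monotone (fun t => c ⬝ᵥ w t) := by
  have hres : ∀ t, (Z t)ᵀ *ᵥ (y - yhat t) = 0 := fun t => by
    rw [hyhat, hw]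
    exact transpose_mulVec_leastSquaresResidual_eq_zero (Z t) (hZ t) y
  have hgram := transpose_mul_self_eq_of_hasDerivAt_vecMulVec hdyn hres
  have hderiv : ∀ t, HasDerivAt (fun s => c ⬝ᵥ w s)
      ((c ⬝ᵥ (((Z t)ᵀ * Z t)⁻¹ *ᵥ c)) * ((y - yhat t) ⬝ᵥ (y - yhat t))) t := by
    intro t
    have hfun : (fun s => c ⬝ᵥ w s)
        = fun s => c ⬝ᵥ (((Z t)ᵀ * Z t)⁻¹ *ᵥ ((Z s)ᵀ *ᵥ y)) :=
      funext fun s => by rw [hw, hgram s t]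
    have hey : (y - yhat t) ⬝ᵥ y = (y - yhat t) ⬝ᵥ (y - yhat t) := by
      have h := sub_mulVec_dotProduct_eq_dotProduct_self (Z t) y (w t) (hyhat t ▸ hres t)
      rwa [← hyhat] at h
    rw [hfun, ← hey]
    exact hasDerivAt_dotProduct_mulVec_transpose_mulVec_of_vecMulVec (hdyn t) _ y
  have hnonneg : ∀ t, 0 ≤ (c ⬝ᵥ (((Z t)ᵀ * Z t)⁻¹ *ᵥ c)) * ((y - yhat t) ⬝ᵥ (y - yhat t)) :=
    fun t => mul_nonneg (dotProduct_inv_transpose_mul_self_mulVec_nonneg (Z t) c)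
      (dotProduct_self_star_nonneg (y - yhat t))
  exact ⟨fun t => ⟨hderiv t, hnonneg t⟩, monotone_of_deriv_nonneg
    (fun t => (hderiv t).differentiableAt) fun t => (hderiv t).deriv ▸ hnonneg t⟩
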